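/- For any 0 < a < 1 there exists a constant C > 0 such that for all p, q ∈ ℝ³ \ {0} that are not positive scalar multiples of each other (so that ρ(p,q) > 0), one has ∫_{S²} |p'(p,q,ω)|^{−1} dω = ∫_{S²} |q'(p,q,ω)|^{−1} dω ≤ C / ( ρ(p,q)^a (|p|+|q|)^{1−a} ), where dω is the surface measure on the unit sphere S² and p', q' are the post-collision momenta defined by the stated parametrization. -/

import Mathlib

noncomputable section

open MeasureTheory Real Metric
open scoped RealInnerProductSpace

/-- Momentum space `ℝ³`. -/
abbrev R3 : Type := EuclideanSpace ℝ (Fin 3)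

/-- The relative momentum `ρ(p,q) = √(2(|p||q| − p·q))`. -/
def relMom (p q : R3) : ℝ := Real.sqrt (2 * (‖p‖ * ‖q‖ - ⟪p, q⟫))

/-- Post-collision momentum `p'`. -/
def pPost (p q ω : R3) : R3 :=
  (1 / 2 : ℝ) • (p + q) + (relMom p q / 2) • ω
    + (⟪p + q, ω⟫ / 2 / (‖p‖ + ‖q‖ + relMom p q)) • (p + q)

/-- Post-collision momentum `q'`. -/
def qPost (p q ω : R3) : R3 :=
  (1 / 2 : ℝ) • (p + q) - (relMom p q / 2) • ω
    - (⟪p + q, ω⟫ / 2 / (‖p‖ + ‖q‖ + relMom p q)) • (p + q)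

/-- Post-collision energy `p'⁰`. -/
def p0Post (p q ω : R3) : ℝ := (‖p‖ + ‖q‖) / 2 + ⟪p + q, ω⟫ / 2

/-- Post-collision energy `q'⁰`. -/
def q0Post (p q ω : R3) : ℝ := (‖p‖ + ‖q‖) / 2 - ⟪p + q, ω⟫ / 2

/-- The surface measure `dω` on the unit sphere `S² ⊂ ℝ³` (total mass `4π`). -/
def sphMeasure : Measure (sphere (0 : R3) 1) := (volume : Measure R3).toSphere

/-- The (modified, for `ε > 0`) massless Boltzmann collision operator with scattering
cross-section `σ = C₁ h^{-b}`. -/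
def Qcoll (C₁ b ε : ℝ) (f : R3 → ℝ) (p : R3) : ℝ :=
  C₁ * ∫ q : R3, ∫ ω : sphere (0 : R3) 1,
      (if ε ≤ relMom p q then relMom p q ^ (2 - b) / (‖p‖ * ‖q‖) else 0)
        * (f (pPost p q ω) * f (qPost p q ω) - f p * f q) ∂sphMeasure

/-! For a unit vector `ω`, `‖p'‖ = (s + ⟪w, ω⟫) / 2` with `s = ‖p‖ + ‖q‖` and `w = p + q`, while
`q'(ω) = p'(-ω)`; as the sphere measure is invariant under `ω ↦ -ω`, both integrals equal
`2 ∫ (s + ⟪w, ω⟫)⁻¹ dω`, and `s² - ‖w‖² = ρ²`. The superlevel sets of the integrand are caps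
around `-w / ‖w‖`; the cone over a cap of height `δ` fits in a box of volume `16 δ`, so the cap
has measure at most `48 δ`. Interpolating this with the total mass `4π` and integrating over the
levels bounds the integral by a multiple of `s ^ (b - 1) * (s - ‖w‖) ^ (-b)` for any `0 < b < 1`,
and `b = a / 2` gives the claim.
-/

lemma qPost_eq_pPost_neg (p q ω : R3) : qPost p q ω = pPost p q (-ω) := by
  simp only [pPost, qPost, inner_neg_right, smul_neg, neg_div, neg_smul]
  module

lemma relMom_eq_sqrt (p q : R3) : relMom p q = √((‖p‖ + ‖q‖) ^ 2 - ‖p + q‖ ^ 2) := by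
  rw [relMom, norm_add_sq_real]
  ring_nf

lemma norm_add_sq_eq_sub_relMom_sq (p q : R3) :
    ‖p + q‖ ^ 2 = (‖p‖ + ‖q‖) ^ 2 - relMom p q ^ 2 := by
  have := norm_add_le p q
  rw [relMom_eq_sqrt, Real.sq_sqrt (by nlinarith [norm_nonneg (p + q)])]
  ring

lemma neg_norm_le_inner_of_norm_eq_one {E : Type*} [NormedAddCommGroup E]
    [InnerProductSpace ℝ E] (w : E) {ω : E} (hω : ‖ω‖ = 1) : -‖w‖ ≤ ⟪w, ω⟫ := by
  simpa [hω] using neg_le_of_abs_le (abs_real_inner_le_norm w ω)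

lemma norm_pPost (p q : R3) {ω : R3} (hω : ‖ω‖ = 1) :
    ‖pPost p q ω‖ = (‖p‖ + ‖q‖ + ⟪p + q, ω⟫) / 2 := by
  have hρ : 0 ≤ relMom p q := Real.sqrt_nonneg _
  rcases eq_or_lt_of_le (add_nonneg (add_nonneg (norm_nonneg p) (norm_nonneg q)) hρ)
    with h0 | hpos
  · have hp : ‖p‖ = 0 := by linarith [norm_nonneg p, norm_nonneg q]
    have hq : ‖q‖ = 0 := by linarith [norm_nonneg p, norm_nonneg q]
    simp [norm_eq_zero.mp hp, norm_eq_zero.mp hq, pPost, relMom]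
  have hx : pPost p q ω = ((1 / 2 : ℝ) + ⟪p + q, ω⟫ / 2 / (‖p‖ + ‖q‖ + relMom p q)) • (p + q)
      + (relMom p q / 2) • ω := by
    rw [pPost]; module
  have hsq : ‖pPost p q ω‖ ^ 2 = ((‖p‖ + ‖q‖ + ⟪p + q, ω⟫) / 2) ^ 2 := by
    rw [hx, norm_add_sq_real, real_inner_smul_left, real_inner_smul_right, norm_smul,
      norm_smul, hω, Real.norm_eq_abs, Real.norm_eq_abs, mul_pow, mul_pow, sq_abs, sq_abs,
      norm_add_sq_eq_sub_relMom_sq]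
    field_simp
    ring
  refine (pow_left_inj₀ (norm_nonneg _) ?_ two_ne_zero).mp hsq
  linarith [norm_add_le p q, neg_norm_le_inner_of_norm_eq_one (p + q) hω]

lemma MeasureTheory.Measure.measurePreserving_neg_toSphere {E : Type*} [NormedAddCommGroup E]
    [NormedSpace ℝ E] [MeasurableSpace E] [BorelSpace E] (μ : Measure E) [μ.IsNegInvariant] :
    MeasurePreserving (Neg.neg : sphere (0 : E) 1 → sphere (0 : E) 1) μ.toSphere μ.toSphere := by
  refine ⟨continuous_neg.measurable, Measure.ext fun s hs => ?_⟩
  have himage : ((↑) '' (Neg.neg ⁻¹' s) : Set E) = -((↑) '' s) := by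
    ext x
    constructor
    · rintro ⟨ω, hω, rfl⟩
      exact ⟨-ω, hω, rfl⟩
    · rintro ⟨ω, hω, hx⟩
      exact ⟨-ω, by simpa using hω, by rw [coe_neg_sphere, hx, neg_neg]⟩
  rw [Measure.map_apply continuous_neg.measurable hs,
    μ.toSphere_apply' (hs.preimage continuous_neg.measurable), μ.toSphere_apply' hs, himage,
    Set.smul_neg, Measure.measure_neg]

instance : IsFiniteMeasure sphMeasure := by
  rw [sphMeasure]
  infer_instance

lemma sphMeasure_real_univ : sphMeasure.real Set.univ = 4 * π := by
  rw [sphMeasure, Measure.toSphere_real_apply_univ, finrank_euclideanSpace_fin, measureReal_def,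
    EuclideanSpace.volume_ball_fin_three, ENNReal.toReal_mul, ENNReal.toReal_ofReal (by positivity)]
  norm_num
  ring

lemma OrthonormalBasis.volume_setOf_abs_inner_le {ι E : Type*} [Fintype ι]
    [NormedAddCommGroup E] [InnerProductSpace ℝ E] [FiniteDimensional ℝ E] [MeasurableSpace E]
    [BorelSpace E] (b : OrthonormalBasis ι ℝ E) (m : ι → ℝ) :
    volume {x : E | ∀ i, |⟪b i, x⟫| ≤ m i} = ∏ i, ENNReal.ofReal (2 * m i) := by
  have hbox : {x : E | ∀ i, |⟪b i, x⟫| ≤ m i}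
      = ((MeasurableEquiv.toLp 2 (ι → ℝ)).symm ∘ b.repr) ⁻¹'
          Set.univ.pi fun i => Set.Icc (-m i) (m i) := by
    ext x
    simp [abs_le, Pi.le_def, forall_and, b.repr_apply_apply]
  rw [hbox, ((EuclideanSpace.volume_preserving_symm_measurableEquiv_toLp ι).comp
      b.measurePreserving_repr).measure_preimage
      (MeasurableSet.univ_pi fun _ => measurableSet_Icc).nullMeasurableSet, volume_pi_pi]
  congr 1 with i
  rw [Real.volume_Icc]
  ring_nf

lemma exists_orthonormalBasis_apply_zero_eq {v : R3} (hv : ‖v‖ = 1) :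
    ∃ b : OrthonormalBasis (Fin 3) ℝ R3, b 0 = v := by
  have hortho : Orthonormal ℝ (({0} : Set (Fin 3)).domRestrict fun _ => v) :=
    ⟨fun _ => hv, fun i j hij => absurd (Subtype.ext (i.2.trans j.2.symm)) hij⟩
  obtain ⟨b, hb⟩ := hortho.exists_orthonormalBasis_extension_of_card_eq (by simp)
  exact ⟨b, hb 0 rfl⟩

lemma abs_inner_le_of_inner_le_mul_norm (b : OrthonormalBasis (Fin 3) ℝ R3) {δ : ℝ}
    (hδ0 : 0 ≤ δ) (hδ1 : δ ≤ 1) {x : R3} (hx : ‖x‖ ≤ 1) (hcone : ⟪b 0, x⟫ ≤ (-1 + δ) * ‖x‖) :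
    ∀ i, |⟪b i, x⟫| ≤ ![1, √(2 * δ), √(2 * δ)] i := by
  have hsum := b.sum_sq_inner_right x
  rw [Fin.sum_univ_three] at hsum
  have h0 : |⟪b 0, x⟫| ≤ ‖x‖ := by
    simpa [b.orthonormal.1 0] using abs_real_inner_le_norm (b 0) x
  have hperp : ⟪b 1, x⟫ ^ 2 + ⟪b 2, x⟫ ^ 2 ≤ 2 * δ := by
    have hfar : ((1 - δ) * ‖x‖) ^ 2 ≤ ⟪b 0, x⟫ ^ 2 := by
      rw [← neg_sq ⟪b 0, x⟫]
      exact pow_le_pow_left₀ (by positivity) (by linarith) 2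
    have hx2 : ‖x‖ ^ 2 * (2 * δ - δ ^ 2) ≤ 2 * δ - δ ^ 2 :=
      mul_le_of_le_one_left (by nlinarith) (pow_le_one₀ (norm_nonneg x) hx)
    nlinarith
  intro i
  fin_cases i
  · exact h0.trans hx
  · show |⟪b 1, x⟫| ≤ √(2 * δ)
    exact Real.abs_le_sqrt (by nlinarith [sq_nonneg ⟪b 2, x⟫])
  · show |⟪b 2, x⟫| ≤ √(2 * δ)
    exact Real.abs_le_sqrt (by nlinarith [sq_nonneg ⟪b 1, x⟫])

open scoped Pointwise in
lemma sphMeasure_cap_le {v : R3} (hv : ‖v‖ = 1) {δ : ℝ} (hδ0 : 0 ≤ δ) (hδ1 : δ ≤ 1) :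
    sphMeasure {ω | ⟪v, (ω : R3)⟫ ≤ -1 + δ} ≤ ENNReal.ofReal (48 * δ) := by
  obtain ⟨b, rfl⟩ := exists_orthonormalBasis_apply_zero_eq hv
  set cap := {ω : sphere (0 : R3) 1 | ⟪b 0, (ω : R3)⟫ ≤ -1 + δ}
  have hcone : Set.Ioo (0 : ℝ) 1 • ((↑) '' cap : Set R3)
      ⊆ {x | ∀ i, |⟪b i, x⟫| ≤ ![1, √(2 * δ), √(2 * δ)] i} := by
    rintro _ ⟨c, ⟨hc0, hc1⟩, _, ⟨ω, hωδ, rfl⟩, rfl⟩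
    have hnorm : ‖c • (ω : R3)‖ = c := by simp [norm_smul, hc0.le]
    refine abs_inner_le_of_inner_le_mul_norm b hδ0 hδ1 (hnorm.trans_le hc1.le) ?_
    rw [hnorm, real_inner_smul_right, mul_comm]
    exact mul_le_mul_of_nonneg_right hωδ hc0.le
  have hcap : MeasurableSet cap := measurableSet_le (by fun_prop) measurable_const
  calc sphMeasure cap = 3 * volume (Set.Ioo (0 : ℝ) 1 • ((↑) '' cap : Set R3)) := by
        rw [sphMeasure, Measure.toSphere_apply' _ hcap, finrank_euclideanSpace_fin]
        rfl
    _ ≤ 3 * volume {x : R3 | ∀ i, |⟪b i, x⟫| ≤ ![1, √(2 * δ), √(2 * δ)] i} := by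
        gcongr
    _ = ENNReal.ofReal (48 * δ) := by
        rw [b.volume_setOf_abs_inner_le, Fin.prod_univ_three]
        simp only [Matrix.cons_val_zero, Matrix.cons_val_one, Matrix.cons_val_two,
          Matrix.head_cons, Matrix.tail_cons]
        rw [← ENNReal.ofReal_mul (by norm_num), ← ENNReal.ofReal_mul (by positivity),
          show (3 : ENNReal) = ENNReal.ofReal 3 by norm_num, ← ENNReal.ofReal_mul (by norm_num)]
        congr 1
        have := Real.mul_self_sqrt (by positivity : 0 ≤ 2 * δ)
        nlinarith

lemma sphMeasure_real_cap_le {v : R3} (hv : ‖v‖ = 1) {δ : ℝ} (hδ : 0 ≤ δ) :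
    sphMeasure.real {ω | ⟪v, (ω : R3)⟫ ≤ -1 + δ} ≤ 48 * δ := by
  rcases le_or_gt δ 1 with hδ1 | hδ1
  · exact ENNReal.toReal_le_of_le_ofReal (by positivity) (sphMeasure_cap_le hv hδ hδ1)
  · calc _ ≤ sphMeasure.real Set.univ := measureReal_mono (Set.subset_univ _)
      _ = 4 * π := sphMeasure_real_univ
      _ ≤ 48 * δ := by linarith [pi_le_four]

lemma le_rpow_of_le_one_of_le {m y c : ℝ} (hm : m ≤ 1) (hmy : m ≤ y) (hy : 0 < y)
    (hc : c ≤ 1) (hc0 : 0 ≤ c) : m ≤ y ^ c := by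
  rcases le_total y 1 with hy1 | hy1
  · exact hmy.trans (Real.self_le_rpow_of_le_one hy.le hy1 hc)
  · exact hm.trans (Real.one_le_rpow hy1 hc0)

lemma rpow_mul_rpow_one_sub_le {ρ s a : ℝ} (hρ : 0 ≤ ρ) (hρs : ρ ≤ s) (ha : 0 ≤ a) :
    ρ ^ a * s ^ (1 - a) ≤ s := by
  have hs : 0 ≤ s := hρ.trans hρs
  calc ρ ^ a * s ^ (1 - a) ≤ s ^ a * s ^ (1 - a) := by gcongr
    _ = s := by rw [← Real.rpow_add' hs (by norm_num), add_sub_cancel, Real.rpow_one]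

lemma rpow_sub_one_mul_sub_rpow_neg_le {r s a : ℝ} (hr : 0 ≤ r) (hrs : r < s) (ha0 : 0 < a)
    (ha2 : a ≤ 2) :
    s ^ (a / 2 - 1) * (s - r) ^ (-(a / 2)) ≤ 2 / (√(s ^ 2 - r ^ 2) ^ a * s ^ (1 - a)) := by
  have hs : 0 < s := hr.trans_lt hrs
  have hsr : 0 < s - r := sub_pos.mpr hrs
  have hsqrt : √(s ^ 2 - r ^ 2) ^ a = (s - r) ^ (a / 2) * (s + r) ^ (a / 2) := by
    rw [show s ^ 2 - r ^ 2 = (s - r) * (s + r) by ring, Real.sqrt_eq_rpow,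
      ← Real.rpow_mul (by positivity), Real.mul_rpow hsr.le (by positivity), one_div_mul_eq_div]
  have hsum : (s + r) ^ (a / 2) ≤ 2 * s ^ (a / 2) :=
    calc (s + r) ^ (a / 2) ≤ (2 * s) ^ (a / 2) := by gcongr; linarith
      _ = 2 ^ (a / 2) * s ^ (a / 2) := Real.mul_rpow (by norm_num) hs.le
      _ ≤ 2 * s ^ (a / 2) := by
          gcongr
          simpa using Real.rpow_le_rpow_of_exponent_le (by norm_num : (1 : ℝ) ≤ 2)
            (by linarith : a / 2 ≤ 1)
  have hpow : s ^ (a / 2 - 1) = (s ^ (a / 2) * s ^ (1 - a))⁻¹ := by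
    rw [← Real.rpow_add hs, ← Real.rpow_neg hs.le]
    ring_nf
  calc s ^ (a / 2 - 1) * (s - r) ^ (-(a / 2))
      = 2 / ((s - r) ^ (a / 2) * (2 * s ^ (a / 2)) * s ^ (1 - a)) := by
        rw [Real.rpow_neg hsr.le, hpow]
        field_simp
    _ ≤ 2 / ((s - r) ^ (a / 2) * (s + r) ^ (a / 2) * s ^ (1 - a)) := by gcongr
    _ = 2 / (√(s ^ 2 - r ^ 2) ^ a * s ^ (1 - a)) := by rw [hsqrt]

section InverseIntegral

variable {w : R3} {s : ℝ}

lemma sub_norm_le_add_inner (ω : sphere (0 : R3) 1) : s - ‖w‖ ≤ s + ⟪w, (ω : R3)⟫ := by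
  linarith [neg_norm_le_inner_of_norm_eq_one w (norm_eq_of_mem_sphere ω)]

lemma sphMeasure_real_setOf_add_inner_le (hw : w ≠ 0) {x : ℝ} (hx : s - ‖w‖ ≤ x) :
    sphMeasure.real {ω | s + ⟪w, (ω : R3)⟫ ≤ x} ≤ 48 * (x - (s - ‖w‖)) / ‖w‖ := by
  have hr : 0 < ‖w‖ := norm_pos_iff.mpr hw
  have hsub : {ω : sphere (0 : R3) 1 | s + ⟪w, (ω : R3)⟫ ≤ x}
      ⊆ {ω | ⟪‖w‖⁻¹ • w, (ω : R3)⟫ ≤ -1 + (x - (s - ‖w‖)) / ‖w‖} := by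
    intro ω hω
    change s + ⟪w, (ω : R3)⟫ ≤ x at hω
    change ⟪‖w‖⁻¹ • w, (ω : R3)⟫ ≤ _
    rw [real_inner_smul_left, inv_mul_eq_div, div_le_iff₀ hr, add_mul,
      div_mul_cancel₀ _ hr.ne']
    linarith
  calc _ ≤ _ := measureReal_mono hsub
    _ ≤ 48 * ((x - (s - ‖w‖)) / ‖w‖) :=
        sphMeasure_real_cap_le (norm_smul_inv_norm hw) (div_nonneg (by linarith) hr.le)
    _ = _ := by ring

lemma sphMeasure_real_setOf_le_inv_add_inner_le {b : ℝ} (hb0 : 0 < b) (hb1 : b < 1)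
    (hsw : s / 2 ≤ ‖w‖) (hws : ‖w‖ < s) {t : ℝ} (ht : 0 < t) (htT : t ≤ (s - ‖w‖)⁻¹) :
    sphMeasure.real {ω | t ≤ (s + ⟪w, (ω : R3)⟫)⁻¹} ≤ 96 * (s ^ (b - 1) * t ^ (b - 1)) := by
  have hs : 0 < s := by linarith [norm_nonneg w]
  have hr : 0 < ‖w‖ := by linarith
  have hsub : {ω : sphere (0 : R3) 1 | t ≤ (s + ⟪w, (ω : R3)⟫)⁻¹}
      ⊆ {ω | s + ⟪w, (ω : R3)⟫ ≤ t⁻¹} := fun ω hω =>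
    (le_inv_comm₀ ht (by linarith [sub_norm_le_add_inner (s := s) (w := w) ω])).mp hω
  have htotal : sphMeasure.real {ω | t ≤ (s + ⟪w, (ω : R3)⟫)⁻¹} ≤ 96 := by
    calc _ ≤ sphMeasure.real Set.univ := measureReal_mono (Set.subset_univ _)
      _ = 4 * π := sphMeasure_real_univ
      _ ≤ 96 := by linarith [pi_le_four]
  have hcap : sphMeasure.real {ω | t ≤ (s + ⟪w, (ω : R3)⟫)⁻¹} ≤ 96 * (s * t)⁻¹ := by
    have hTt : s - ‖w‖ ≤ t⁻¹ := (le_inv_comm₀ ht (sub_pos.mpr hws)).mp htT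
    calc _ ≤ _ := measureReal_mono hsub
      _ ≤ 48 * (t⁻¹ - (s - ‖w‖)) / ‖w‖ :=
          sphMeasure_real_setOf_add_inner_le (norm_pos_iff.mp hr) hTt
      _ ≤ 48 * t⁻¹ / (s / 2) := by
          gcongr
          linarith
      _ = 96 * (s * t)⁻¹ := by field_simp; ring
  have hpow : (s * t)⁻¹ ^ (1 - b) = s ^ (b - 1) * t ^ (b - 1) := by
    rw [Real.inv_rpow (by positivity), ← Real.rpow_neg (by positivity), neg_sub,
      Real.mul_rpow hs.le ht.le]
  rw [← hpow, ← div_le_iff₀' (by norm_num)]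
  exact le_rpow_of_le_one_of_le (by linarith) (by rw [div_le_iff₀' (by norm_num)]; exact hcap)
    (by positivity) (by linarith) (by linarith)

lemma continuous_inv_add_inner (hws : ‖w‖ < s) :
    Continuous fun ω : sphere (0 : R3) 1 => (s + ⟪w, (ω : R3)⟫)⁻¹ :=
  Continuous.inv₀ (by fun_prop) fun ω =>
    ((sub_pos.mpr hws).trans_le (sub_norm_le_add_inner ω)).ne'

lemma integral_inv_add_inner_le_of_half_le {b : ℝ} (hb0 : 0 < b) (hb1 : b < 1)
    (hsw : s / 2 ≤ ‖w‖) (hws : ‖w‖ < s) :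
    ∫ ω, (s + ⟪w, (ω : R3)⟫)⁻¹ ∂sphMeasure ≤ 96 / b * s ^ (b - 1) * (s - ‖w‖) ^ (-b) := by
  have hsr : 0 < s - ‖w‖ := sub_pos.mpr hws
  have hT : 0 ≤ (s - ‖w‖)⁻¹ := (inv_pos.mpr hsr).le
  have hint : Integrable (fun ω : sphere (0 : R3) 1 => (s + ⟪w, (ω : R3)⟫)⁻¹) sphMeasure :=
    (continuous_inv_add_inner hws).integrable_of_hasCompactSupport (.of_compactSpace _)
  have hrpow : IntegrableOn (fun t : ℝ => 96 * (s ^ (b - 1) * t ^ (b - 1)))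
      (Set.Ioc 0 (s - ‖w‖)⁻¹) :=
    (((intervalIntegrable_iff_integrableOn_Ioc_of_le hT).mp
      (intervalIntegral.intervalIntegrable_rpow' (by linarith))).const_mul _).const_mul _
  calc ∫ ω, (s + ⟪w, (ω : R3)⟫)⁻¹ ∂sphMeasure
      = ∫ t in Set.Ioc 0 (s - ‖w‖)⁻¹, sphMeasure.real {ω | t ≤ (s + ⟪w, (ω : R3)⟫)⁻¹} :=
        hint.integral_eq_integral_Ioc_meas_le
          (.of_forall fun ω => (inv_pos.mpr (hsr.trans_le (sub_norm_le_add_inner ω))).le)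
          (.of_forall fun ω => inv_anti₀ hsr (sub_norm_le_add_inner ω))
    _ ≤ ∫ t in Set.Ioc 0 (s - ‖w‖)⁻¹, 96 * (s ^ (b - 1) * t ^ (b - 1)) :=
        integral_mono_of_nonneg (.of_forall fun _ => measureReal_nonneg) hrpow
          ((ae_restrict_iff' measurableSet_Ioc).mpr (.of_forall fun _ ht =>
            sphMeasure_real_setOf_le_inv_add_inner_le hb0 hb1 hsw hws ht.1 ht.2))
    _ = 96 / b * s ^ (b - 1) * (s - ‖w‖) ^ (-b) := by
        rw [← intervalIntegral.integral_of_le hT, intervalIntegral.integral_const_mul,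
          intervalIntegral.integral_const_mul, integral_rpow (Or.inl (by linarith)),
          sub_add_cancel, Real.zero_rpow hb0.ne', sub_zero, Real.inv_rpow hsr.le,
          ← Real.rpow_neg hsr.le]
        field_simp

lemma integral_inv_add_inner_le_of_le_half (hs : 0 < s) (hsw : ‖w‖ ≤ s / 2) :
    ∫ ω, (s + ⟪w, (ω : R3)⟫)⁻¹ ∂sphMeasure ≤ 8 * π / s := by
  have hbound : ∀ ω : sphere (0 : R3) 1, ‖(s + ⟪w, (ω : R3)⟫)⁻¹‖ ≤ 2 / s := fun ω => by
    have := sub_norm_le_add_inner (s := s) (w := w) ω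
    rw [norm_inv, Real.norm_of_nonneg (by linarith), ← inv_div]
    exact inv_anti₀ (by positivity) (by linarith)
  calc _ ≤ ‖∫ ω, (s + ⟪w, (ω : R3)⟫)⁻¹ ∂sphMeasure‖ := Real.le_norm_self _
    _ ≤ 2 / s * sphMeasure.real Set.univ := norm_integral_le_of_norm_le_const (.of_forall hbound)
    _ = 8 * π / s := by rw [sphMeasure_real_univ]; ring

theorem integral_inv_add_inner_le {a : ℝ} (ha0 : 0 < a) (ha2 : a < 2) (hws : ‖w‖ < s) :
    ∫ ω, (s + ⟪w, (ω : R3)⟫)⁻¹ ∂sphMeasure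
      ≤ 384 / a / (√(s ^ 2 - ‖w‖ ^ 2) ^ a * s ^ (1 - a)) := by
  have hs : 0 < s := (norm_nonneg w).trans_lt hws
  have hρ : 0 < √(s ^ 2 - ‖w‖ ^ 2) := Real.sqrt_pos.mpr (by nlinarith [norm_nonneg w])
  rcases le_or_gt (s / 2) ‖w‖ with hsw | hsw
  · calc _ ≤ 96 / (a / 2) * s ^ (a / 2 - 1) * (s - ‖w‖) ^ (-(a / 2)) :=
          integral_inv_add_inner_le_of_half_le (by positivity) (by linarith) hsw hws
      _ ≤ 192 / a * (2 / (√(s ^ 2 - ‖w‖ ^ 2) ^ a * s ^ (1 - a))) := by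
          rw [mul_assoc, show 96 / (a / 2) = 192 / a by ring]
          gcongr
          exact rpow_sub_one_mul_sub_rpow_neg_le (norm_nonneg w) hws ha0 ha2.le
      _ = _ := by ring
  · have hρs : √(s ^ 2 - ‖w‖ ^ 2) ≤ s :=
      (Real.sqrt_le_sqrt (by nlinarith)).trans_eq (Real.sqrt_sq hs.le)
    have hπ : 8 * π ≤ 384 / a := by
      rw [le_div_iff₀ ha0]
      nlinarith [pi_le_four, pi_pos]
    calc _ ≤ 8 * π / s := integral_inv_add_inner_le_of_le_half hs hsw.le
      _ ≤ 384 / a / s := by gcongr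
      _ ≤ _ := by gcongr; exact rpow_mul_rpow_one_sub_le hρ.le hρs ha0.le

end InverseIntegral

/-- **Lemma 4.** For `0 < a < 1` there is `C > 0` with
`∫_{S²} |p'|⁻¹ dω = ∫_{S²} |q'|⁻¹ dω ≤ C / (ρ(p,q)^a (|p|+|q|)^{1-a})`
whenever `p, q ≠ 0` are not positive scalar multiples of each other. -/
theorem sphere_integral_inv_pPost (a : ℝ) (ha0 : 0 < a) (ha1 : a < 1) :
    ∃ C : ℝ, 0 < C ∧ ∀ p q : R3, p ≠ 0 → q ≠ 0 → (∀ c : ℝ, 0 < c → q ≠ c • p) →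
      (∫ ω : sphere (0 : R3) 1, ‖pPost p q (ω : R3)‖⁻¹ ∂sphMeasure)
        = (∫ ω : sphere (0 : R3) 1, ‖qPost p q (ω : R3)‖⁻¹ ∂sphMeasure) ∧
      (∫ ω : sphere (0 : R3) 1, ‖pPost p q (ω : R3)‖⁻¹ ∂sphMeasure)
        ≤ C / (relMom p q ^ a * (‖p‖ + ‖q‖) ^ (1 - a)) := by
  refine ⟨768 / a, by positivity, fun p q hp hq hpq => ⟨?_, ?_⟩⟩
  · simp_rw [qPost_eq_pPost_neg, ← coe_neg_sphere]
    exact ((volume : Measure R3).measurePreserving_neg_toSphere.integral_comp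
      (MeasurableEquiv.neg _).measurableEmbedding _).symm
  · have hlt : ‖p + q‖ < ‖p‖ + ‖q‖ := norm_add_lt_of_not_sameRay fun h =>
      let ⟨c, hc, hcq⟩ := h.exists_pos_left hp hq
      hpq c hc hcq.symm
    have hnorm (ω : sphere (0 : R3) 1) :
        ‖pPost p q ω‖⁻¹ = 2 * (‖p‖ + ‖q‖ + ⟪p + q, (ω : R3)⟫)⁻¹ := by
      rw [norm_pPost p q (norm_eq_of_mem_sphere ω), inv_div, div_eq_mul_inv]
    rw [integral_congr_ae (.of_forall hnorm), integral_const_mul, relMom_eq_sqrt]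
    calc _ ≤ 2 * (384 / a / (√((‖p‖ + ‖q‖) ^ 2 - ‖p + q‖ ^ 2) ^ a * (‖p‖ + ‖q‖) ^ (1 - a))) := by
          gcongr
          exact integral_inv_add_inner_le ha0 (by linarith) hlt
      _ = _ := by ring
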